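/- arXiv:0908.2988 — 3 statements merged into one kernel-verified Lean document; each statement's English description precedes it below -/
import Mathlib

section
/- Let rk be a megamatroid on {1,…,d} with d ≥ 1, let Π = Q(rk), let ∅ ⊂ X_1 ⊂ X_2 ⊂ ⋯ ⊂ X_d = {1,…,d} be a maximal chain of subsets (so |X_j| = j for all j), and let α_1,…,α_d be real numbers with α_1,…,α_{d−1} ≥ 0. Then sup_{y∈Π} Σ_{j=1}^d α_j Σ_{i∈X_j} y_i = Σ_{j=1}^d α_j · rk_Π(X_j), where the suprema and the arithmetic are in the extended reals ℝ ∪ {−∞, +∞} with the convention 0·(+∞) = 0. -/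
open scoped BigOperators

structure Megamatroid (d : ℕ) where
  rk : Finset (Fin d) → WithTop ℤ
  rk_empty : rk ∅ = 0
  rk_univ_ne_top : rk Finset.univ ≠ ⊤
  submodular : ∀ A B : Finset (Fin d), rk A ≠ ⊤ → rk B ≠ ⊤ →
    rk (A ∪ B) ≠ ⊤ ∧ rk (A ∩ B) ≠ ⊤ ∧ rk (A ∪ B) + rk (A ∩ B) ≤ rk A + rk B

def megaQ {d : ℕ} (M : Megamatroid d) : Set (Fin d → ℝ) :=
  {y | (∀ z : ℤ, M.rk Finset.univ = (z : WithTop ℤ) → ∑ i, y i = (z : ℝ)) ∧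
    ∀ A : Finset (Fin d), ∀ z : ℤ, M.rk A = (z : WithTop ℤ) → ∑ i ∈ A, y i ≤ (z : ℝ)}

noncomputable def rkSet {d : ℕ} (P : Set (Fin d → ℝ)) (S : Finset (Fin d)) : EReal :=
  ⨆ y ∈ P, ((∑ i ∈ S, y i : ℝ) : EReal)

/-!
Only the finitely many sets of finite rank constrain `Q(rk)`. Extending `rk` from them by the
McShane formula `g_N(A) = min_B (rk B + N * |A ∆ B|)` gives, for `N ≥ 0`, a finite submodular
function that agrees with `rk` on the sets of finite rank once `N` is large, and that bounds
`∑_{i ∈ S} y_i` for every `y ∈ Q(rk)` with all `|y_i| ≤ N`. Edmonds' greedy vector of `g_N`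
along the chain lies in `Q(rk)` and attains `g_N(X_j)` for all `j` at once, so
`rk_Π(X_j) = sup_N g_N(X_j)` is approached simultaneously for all `j` by a single sequence of
points of `Q(rk)`. As `α_j ≥ 0` for `j < d` and `∑_i y_i` is constant on `Q(rk)`, the suprema
then commute with the combination.
-/

open Finset Function symmDiff

namespace EReal

lemma coe_finset_sum {ι : Type*} (s : Finset ι) (f : ι → ℝ) :
    ((∑ i ∈ s, f i : ℝ) : EReal) = ∑ i ∈ s, (f i : EReal) := by
  induction s using Finset.cons_induction with
  | empty => simp
  | cons a s _ ih => rw [sum_cons, sum_cons, coe_add, ih]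

lemma iSup_add_iSup_le_of_monotone {ι : Type*} [Preorder ι] [IsDirectedOrder ι]
    {f g : ι → EReal} (hf : Monotone f) (hg : Monotone g) :
    (⨆ i, f i) + ⨆ i, g i ≤ ⨆ i, f i + g i := by
  refine add_le_of_forall_lt fun a ha b hb => ?_
  obtain ⟨i, hi⟩ := lt_iSup_iff.1 ha
  obtain ⟨j, hj⟩ := lt_iSup_iff.1 hb
  obtain ⟨k, hik, hjk⟩ := exists_ge_ge i j
  exact le_iSup_of_le k (add_le_add (hi.le.trans (hf hik)) (hj.le.trans (hg hjk)))

lemma sum_iSup_le_iSup_sum_of_monotone {ι κ : Type*} [Nonempty ι] [Preorder ι]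
    [IsDirectedOrder ι] (s : Finset κ) {f : κ → ι → EReal} (hf : ∀ j ∈ s, Monotone (f j)) :
    ∑ j ∈ s, ⨆ i, f j i ≤ ⨆ i, ∑ j ∈ s, f j i := by
  induction s using Finset.cons_induction with
  | empty => simp
  | cons a s _ ih =>
    simp only [sum_cons] at hf ⊢
    calc (⨆ i, f a i) + ∑ j ∈ s, ⨆ i, f j i
        ≤ (⨆ i, f a i) + ⨆ i, ∑ j ∈ s, f j i :=
          add_le_add_right (ih fun j hj => hf j (mem_cons_of_mem hj)) _
      _ ≤ ⨆ i, f a i + ∑ j ∈ s, f j i :=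
          iSup_add_iSup_le_of_monotone (hf a (mem_cons_self a s))
            fun i i' h => sum_le_sum fun j hj => hf j (mem_cons_of_mem hj) h

lemma coe_mul_iSup_le {ι : Type*} [Nonempty ι] {c : ℝ} (hc : 0 ≤ c) (f : ι → ℝ) :
    (c : EReal) * ⨆ i, (f i : EReal) ≤ ⨆ i, ((c * f i : ℝ) : EReal) := by
  rcases hc.eq_or_lt with rfl | hc
  · simp
  have hc' : (0 : EReal) < c := by exact_mod_cast hc
  rw [mul_comm, ← le_div_iff_mul_le hc' (coe_ne_top c)]
  refine iSup_le fun i => ?_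
  rw [le_div_iff_mul_le hc' (coe_ne_top c), mul_comm, ← coe_mul]
  exact le_iSup (fun i => ((c * f i : ℝ) : EReal)) i

lemma sum_coe_mul_iSup_le {κ : Type*} (s : Finset κ) (c : κ → ℝ) (a : κ → ℕ → ℝ)
    (ha : ∀ j ∈ s, Monotone (a j)) (hc : ∀ j ∈ s, 0 ≤ c j ∨ ∀ n, a j n = a j 0) :
    ∑ j ∈ s, (c j : EReal) * ⨆ n, (a j n : EReal) ≤
      ⨆ n, ((∑ j ∈ s, c j * a j n : ℝ) : EReal) := by
  have h_term : ∀ j ∈ s,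
      (c j : EReal) * ⨆ n, (a j n : EReal) ≤ ⨆ n, ((c j * a j n : ℝ) : EReal) := by
    intro j hj
    rcases hc j hj with hcj | h_const
    · exact coe_mul_iSup_le hcj _
    · simp [h_const]
  have h_mono : ∀ j ∈ s, Monotone fun n => ((c j * a j n : ℝ) : EReal) := by
    intro j hj m n hmn
    rcases hc j hj with hcj | h_const
    · exact EReal.coe_le_coe_iff.2 (mul_le_mul_of_nonneg_left (ha j hj hmn) hcj)
    · simp only [h_const m, h_const n, le_refl]
  calc ∑ j ∈ s, (c j : EReal) * ⨆ n, (a j n : EReal)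
      ≤ ∑ j ∈ s, ⨆ n, ((c j * a j n : ℝ) : EReal) := sum_le_sum h_term
    _ ≤ ⨆ n, ∑ j ∈ s, ((c j * a j n : ℝ) : EReal) :=
        sum_iSup_le_iSup_sum_of_monotone s h_mono
    _ = ⨆ n, ((∑ j ∈ s, c j * a j n : ℝ) : EReal) := by simp_rw [coe_finset_sum]

end EReal

section LipschitzExtension

variable {α : Type*} [DecidableEq α]

def IsSubmodular (g : Finset α → ℝ) : Prop :=
  ∀ A B, g (A ∪ B) + g (A ∩ B) ≤ g A + g B

lemma card_symmDiff_union_add_card_symmDiff_inter_le (A₁ A₂ B₁ B₂ : Finset α) :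
    #((A₁ ∪ A₂) ∆ (B₁ ∪ B₂)) + #((A₁ ∩ A₂) ∆ (B₁ ∩ B₂)) ≤ #(A₁ ∆ B₁) + #(A₂ ∆ B₂) := by
  have h_union : (A₁ ∪ A₂) ∆ (B₁ ∪ B₂) ∪ (A₁ ∩ A₂) ∆ (B₁ ∩ B₂) ⊆ A₁ ∆ B₁ ∪ A₂ ∆ B₂ := by
    intro x; simp only [mem_union, mem_inter, mem_symmDiff]; tauto
  have h_inter : (A₁ ∪ A₂) ∆ (B₁ ∪ B₂) ∩ (A₁ ∩ A₂) ∆ (B₁ ∩ B₂) ⊆ A₁ ∆ B₁ ∩ A₂ ∆ B₂ := by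
    intro x; simp only [mem_union, mem_inter, mem_symmDiff]; tauto
  rw [← card_union_add_card_inter, ← card_union_add_card_inter (A₁ ∆ B₁)]
  exact add_le_add (card_le_card h_union) (card_le_card h_inter)

variable {L : Finset (Finset α)} (hL : L.Nonempty) (r : Finset α → ℝ)

noncomputable def lipschitzExt (N : ℝ) (A : Finset α) : ℝ :=
  L.inf' hL fun B => r B + N * #(A ∆ B)

variable {hL r}

lemma lipschitzExt_le {N : ℝ} {B : Finset α} (hB : B ∈ L) (A : Finset α) :
    lipschitzExt hL r N A ≤ r B + N * #(A ∆ B) :=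
  inf'_le _ hB

lemma lipschitzExt_le_of_mem {N : ℝ} {A : Finset α} (hA : A ∈ L) :
    lipschitzExt hL r N A ≤ r A := by
  simpa using lipschitzExt_le (N := N) hA A

lemma lipschitzExt_mono (A : Finset α) : Monotone fun N => lipschitzExt hL r N A :=
  fun _ _ h => le_inf' _ _ fun B hB => (lipschitzExt_le hB A).trans (by gcongr)

lemma lipschitzExt_eq_of_mem {N : ℝ} {A : Finset α} (hA : A ∈ L)
    (hN : ∀ B ∈ L, r A ≤ r B + N) : lipschitzExt hL r N A = r A := by
  refine (lipschitzExt_le_of_mem hA).antisymm (le_inf' _ _ fun B hB => ?_)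
  obtain rfl | hAB := eq_or_ne A B
  · simp
  have hN₀ : 0 ≤ N := by simpa using hN A hA
  have h_card : (1 : ℝ) ≤ #(A ∆ B) := by exact_mod_cast (symmDiff_nonempty.2 hAB).card_pos
  linarith [hN B hB, le_mul_of_one_le_right hN₀ h_card]

lemma exists_lipschitzExt_eq (hL : L.Nonempty) (r : Finset α → ℝ) :
    ∃ N₀ ≥ 0, ∀ N ≥ N₀, ∀ A ∈ L, lipschitzExt hL r N A = r A := by
  obtain ⟨N₀, hN₀⟩ := ((L ×ˢ L).image fun p => r p.1 - r p.2).exists_le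
  have h_gap : ∀ A ∈ L, ∀ B ∈ L, r A - r B ≤ N₀ := fun A hA B hB =>
    hN₀ _ (mem_image.2 ⟨(A, B), mem_product.2 ⟨hA, hB⟩, rfl⟩)
  obtain ⟨A, hA⟩ := hL
  refine ⟨N₀, by simpa using h_gap A hA A hA, fun N hN A hA =>
    lipschitzExt_eq_of_mem hA fun B hB => ?_⟩
  linarith [h_gap A hA B hB]

lemma sum_le_lipschitzExt {N : ℝ} {y : α → ℝ} (hy : ∀ B ∈ L, ∑ i ∈ B, y i ≤ r B)
    (hN : ∀ i, |y i| ≤ N) (S : Finset α) : ∑ i ∈ S, y i ≤ lipschitzExt hL r N S := by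
  refine le_inf' _ _ fun B hB => ?_
  have h₁ : ∑ i ∈ S \ B, y i ≤ ∑ i ∈ S \ B, |y i| := sum_le_sum fun i _ => le_abs_self _
  have h₂ : -∑ i ∈ B \ S, y i ≤ ∑ i ∈ B \ S, |y i| :=
    (neg_le_abs _).trans (abs_sum_le_sum_abs _ _)
  calc ∑ i ∈ S, y i = ∑ i ∈ B, y i + (∑ i ∈ S \ B, y i - ∑ i ∈ B \ S, y i) := by
        rw [sum_sdiff_sub_sum_sdiff]; ring
    _ ≤ r B + ∑ i ∈ S ∆ B, |y i| := by
        rw [Finset.symmDiff_def, sum_union disjoint_sdiff_sdiff]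
        linarith [hy B hB]
    _ ≤ r B + N * #(S ∆ B) := by
        grw [sum_le_card_nsmul _ _ N fun i _ => hN i, nsmul_eq_mul, mul_comm]

lemma lipschitzExt_isSubmodular (hL_lattice : ∀ A ∈ L, ∀ B ∈ L, A ∪ B ∈ L ∧ A ∩ B ∈ L)
    (hr : ∀ A ∈ L, ∀ B ∈ L, r (A ∪ B) + r (A ∩ B) ≤ r A + r B) {N : ℝ} (hN : 0 ≤ N) :
    IsSubmodular (lipschitzExt hL r N) := by
  intro A B
  obtain ⟨B₁, hB₁, hA_eq⟩ : ∃ B₁ ∈ L, lipschitzExt hL r N A = r B₁ + N * #(A ∆ B₁) :=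
    exists_mem_eq_inf' hL _
  obtain ⟨B₂, hB₂, hB_eq⟩ : ∃ B₂ ∈ L, lipschitzExt hL r N B = r B₂ + N * #(B ∆ B₂) :=
    exists_mem_eq_inf' hL _
  obtain ⟨h_union, h_inter⟩ := hL_lattice B₁ hB₁ B₂ hB₂
  have h_card : (#((A ∪ B) ∆ (B₁ ∪ B₂)) + #((A ∩ B) ∆ (B₁ ∩ B₂)) : ℝ) ≤
      #(A ∆ B₁) + #(B ∆ B₂) := by
    exact_mod_cast card_symmDiff_union_add_card_symmDiff_inter_le A B B₁ B₂
  calc lipschitzExt hL r N (A ∪ B) + lipschitzExt hL r N (A ∩ B)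
      ≤ r (B₁ ∪ B₂) + N * #((A ∪ B) ∆ (B₁ ∪ B₂)) +
          (r (B₁ ∩ B₂) + N * #((A ∩ B) ∆ (B₁ ∩ B₂))) :=
        add_le_add (lipschitzExt_le h_union _) (lipschitzExt_le h_inter _)
    _ ≤ r B₁ + N * #(A ∆ B₁) + (r B₂ + N * #(B ∆ B₂)) := by
        linarith [hr B₁ hB₁ B₂ hB₂, mul_le_mul_of_nonneg_left h_card hN]
    _ = lipschitzExt hL r N A + lipschitzExt hL r N B := by rw [hA_eq, hB_eq]

end LipschitzExtension

section Greedy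

variable {α : Type*} [Fintype α] (f : α → ℕ)

def sublevel (k : ℕ) : Finset α := {i | f i < k}

lemma mem_sublevel {f : α → ℕ} {k : ℕ} {i : α} : i ∈ sublevel f k ↔ f i < k := by
  simp [sublevel]

lemma sublevel_zero : sublevel f 0 = ∅ := by
  ext; simp [mem_sublevel]

lemma exists_sublevel_eq_univ : ∃ k, sublevel f k = univ :=
  ⟨univ.sup f + 1, eq_univ_of_forall fun i =>
    mem_sublevel.2 (Nat.lt_succ_of_le (le_sup (mem_univ i)))⟩

variable {f}

lemma sublevel_succ_of_forall_ne {k : ℕ} (h : ∀ a, f a ≠ k) :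
    sublevel f (k + 1) = sublevel f k := by
  ext i
  simp only [mem_sublevel]
  have := h i
  omega

def greedyVector (g : Finset α → ℝ) (f : α → ℕ) (i : α) : ℝ :=
  g (sublevel f (f i + 1)) - g (sublevel f (f i))

variable {g : Finset α → ℝ}

lemma greedyVector_of_eq {a : α} {k : ℕ} (ha : f a = k) :
    greedyVector g f a = g (sublevel f (k + 1)) - g (sublevel f k) := by
  rw [greedyVector, ha]

variable [DecidableEq α]

lemma sublevel_succ_of_eq (hf : Injective f) {a : α} {k : ℕ} (ha : f a = k) :
    sublevel f (k + 1) = insert a (sublevel f k) := by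
  ext i
  simp only [mem_insert, mem_sublevel]
  constructor
  · intro hi
    rcases Nat.lt_succ_iff_lt_or_eq.1 hi with hi | hi
    · exact Or.inr hi
    · exact Or.inl (hf (hi.trans ha.symm))
  · rintro (rfl | hi) <;> omega

lemma sum_greedyVector_sublevel (hf : Injective f) (k : ℕ) :
    ∑ i ∈ sublevel f k, greedyVector g f i = g (sublevel f k) - g ∅ := by
  induction k with
  | zero => simp [sublevel_zero]
  | succ k ih =>
    by_cases h : ∃ a, f a = k
    · obtain ⟨a, ha⟩ := h
      rw [sublevel_succ_of_eq hf ha, sum_insert (by simp [mem_sublevel, ha]), ih,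
        greedyVector_of_eq ha, sublevel_succ_of_eq hf ha]
      ring
    · rw [sublevel_succ_of_forall_ne (not_exists.1 h), ih]

lemma sum_greedyVector_le (hf : Injective f) (hg : IsSubmodular g) (A : Finset α) :
    ∑ i ∈ A, greedyVector g f i ≤ g A - g ∅ := by
  suffices h : ∀ k, ∀ A ⊆ sublevel f k, ∑ i ∈ A, greedyVector g f i ≤ g A - g ∅ by
    obtain ⟨k, hk⟩ := exists_sublevel_eq_univ f
    exact h k A (hk ▸ subset_univ A)
  intro k
  induction k with
  | zero => simp [sublevel_zero]
  | succ k ih =>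
    intro A hA
    by_cases h : ∃ a ∈ A, f a = k
    · obtain ⟨a, haA, ha⟩ := h
      rw [sublevel_succ_of_eq hf ha] at hA
      have h_union : A ∪ sublevel f k = sublevel f (k + 1) := by
        rw [sublevel_succ_of_eq hf ha]
        exact (union_subset hA (subset_insert _ _)).antisymm
          (insert_subset (mem_union_left _ haA) subset_union_right)
      have h_inter : A ∩ sublevel f k = A.erase a := by
        ext i
        grind [mem_sublevel]
      have h_sub := hg A (sublevel f k)
      rw [h_union, h_inter] at h_sub
      have h_erase := ih (A.erase a) (h_inter ▸ inter_subset_right)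
      rw [← add_sum_erase _ _ haA, greedyVector_of_eq ha]
      linarith
    · push Not at h
      exact ih A fun i hi => mem_sublevel.2 <|
        (Nat.lt_succ_iff_lt_or_eq.1 (mem_sublevel.1 (hA hi))).resolve_right (h i hi)

end Greedy

lemma exists_injective_sublevel_eq_of_chain {α : Type*} [Fintype α] {d : ℕ}
    {X : Fin d → Finset α} (hmono : Monotone X) (hcard : ∀ j, #(X j) = j + 1)
    (hcover : ∀ i, ∃ j, i ∈ X j) :
    ∃ f : α → ℕ, Injective f ∧ ∀ j, X j = sublevel f (j + 1) := by
  classical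
  -- `f i` counts the members of the chain that miss `i`; they form an initial segment.
  set f : α → ℕ := fun i => #{j | i ∉ X j}
  have h_mem : ∀ i j, i ∈ X j ↔ f i ≤ j := by
    intro i j
    constructor
    · intro hi
      calc f i ≤ #(Iio j) := card_le_card fun k hk => by
              simp only [mem_filter, mem_univ, true_and] at hk
              exact mem_Iio.2 (lt_of_not_ge fun hjk => hk (hmono hjk hi))
        _ = j := Fin.card_Iio j
    · intro hf
      by_contra hi
      have : #(Iic j) ≤ f i := card_le_card fun k hk => by
        simp only [mem_filter, mem_univ, true_and]
        exact fun hk' => hi (hmono (mem_Iic.1 hk) hk')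
      rw [Fin.card_Iic] at this
      omega
  have h_sublevel : ∀ j, X j = sublevel f (j + 1) := fun j => by
    ext i; rw [h_mem, mem_sublevel, Nat.lt_succ_iff]
  refine ⟨f, fun a b hab => ?_, h_sublevel⟩
  obtain ⟨j, hj⟩ := hcover a
  have ha : f a < d := ((h_mem a j).1 hj).trans_lt j.isLt
  have h_below : #(sublevel f (f a)) = f a := by
    rcases h : f a with _ | k
    · simp [sublevel_zero]
    · rw [← h_sublevel ⟨k, by omega⟩, hcard]
  have h_level : #(sublevel f (f a + 1) \ sublevel f (f a)) ≤ 1 := by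
    rw [card_sdiff_of_subset, ← h_sublevel ⟨f a, ha⟩, hcard, h_below]
    · simp
    · exact fun i hi => mem_sublevel.2 ((mem_sublevel.1 hi).trans (Nat.lt_succ_self _))
  exact card_le_one.1 h_level a (by simp [mem_sublevel]) b (by simp [mem_sublevel, hab])

lemma sum_le_rkSet {d : ℕ} {P : Set (Fin d → ℝ)} {y : Fin d → ℝ} (hy : y ∈ P)
    (S : Finset (Fin d)) : ((∑ i ∈ S, y i : ℝ) : EReal) ≤ rkSet P S :=
  le_iSup₂_of_le y hy le_rfl

namespace Megamatroid

variable {d : ℕ} (M : Megamatroid d)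

def finSets : Finset (Finset (Fin d)) := {A | M.rk A ≠ ⊤}

/-- Junk value `0` on sets of infinite rank. -/
noncomputable def rkReal (A : Finset (Fin d)) : ℝ := ((M.rk A).untopD 0 : ℤ)

variable {M}

lemma mem_finSets {A : Finset (Fin d)} : A ∈ M.finSets ↔ M.rk A ≠ ⊤ := by
  simp [finSets]

lemma empty_mem_finSets : ∅ ∈ M.finSets := by
  simp [mem_finSets, M.rk_empty]

lemma univ_mem_finSets : univ ∈ M.finSets := mem_finSets.2 M.rk_univ_ne_top

lemma finSets_nonempty (M : Megamatroid d) : M.finSets.Nonempty := ⟨∅, empty_mem_finSets⟩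

lemma rkReal_eq_of_rk_eq {A : Finset (Fin d)} {z : ℤ} (h : M.rk A = z) : M.rkReal A = z := by
  simp [rkReal, h]

lemma rkReal_empty : M.rkReal ∅ = 0 := by
  simp [rkReal, M.rk_empty]

lemma union_mem_finSets {A B : Finset (Fin d)} (hA : A ∈ M.finSets) (hB : B ∈ M.finSets) :
    A ∪ B ∈ M.finSets :=
  mem_finSets.2 (M.submodular A B (mem_finSets.1 hA) (mem_finSets.1 hB)).1

lemma inter_mem_finSets {A B : Finset (Fin d)} (hA : A ∈ M.finSets) (hB : B ∈ M.finSets) :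
    A ∩ B ∈ M.finSets :=
  mem_finSets.2 (M.submodular A B (mem_finSets.1 hA) (mem_finSets.1 hB)).2.1

lemma rkReal_union_add_inter_le {A B : Finset (Fin d)} (hA : A ∈ M.finSets)
    (hB : B ∈ M.finSets) : M.rkReal (A ∪ B) + M.rkReal (A ∩ B) ≤ M.rkReal A + M.rkReal B := by
  obtain ⟨h_union, h_inter, h_le⟩ := M.submodular A B (mem_finSets.1 hA) (mem_finSets.1 hB)
  obtain ⟨a, ha⟩ := WithTop.ne_top_iff_exists.1 (mem_finSets.1 hA)
  obtain ⟨b, hb⟩ := WithTop.ne_top_iff_exists.1 (mem_finSets.1 hB)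
  obtain ⟨u, hu⟩ := WithTop.ne_top_iff_exists.1 h_union
  obtain ⟨v, hv⟩ := WithTop.ne_top_iff_exists.1 h_inter
  rw [← ha, ← hb, ← hu, ← hv] at h_le
  rw [rkReal_eq_of_rk_eq ha.symm, rkReal_eq_of_rk_eq hb.symm, rkReal_eq_of_rk_eq hu.symm,
    rkReal_eq_of_rk_eq hv.symm]
  exact_mod_cast h_le

lemma mem_megaQ_iff {y : Fin d → ℝ} :
    y ∈ megaQ M ↔ ∑ i, y i = M.rkReal univ ∧ ∀ A ∈ M.finSets, ∑ i ∈ A, y i ≤ M.rkReal A := by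
  obtain ⟨r, hr⟩ := WithTop.ne_top_iff_exists.1 M.rk_univ_ne_top
  refine and_congr ⟨fun h => by rw [h r hr.symm, rkReal_eq_of_rk_eq hr.symm],
    fun h z hz => by rw [h, rkReal_eq_of_rk_eq hz]⟩ ⟨fun h A hA => ?_, fun h A z hz => ?_⟩
  · obtain ⟨z, hz⟩ := WithTop.ne_top_iff_exists.1 (mem_finSets.1 hA)
    rw [rkReal_eq_of_rk_eq hz.symm]
    exact h A z hz.symm
  · rw [← rkReal_eq_of_rk_eq hz]
    exact h A (mem_finSets.2 (by simp [hz]))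


lemma exists_mem_megaQ_sum_sublevel_eq {f : Fin d → ℕ} (hf : Injective f) {N : ℝ}
    (hN₀ : 0 ≤ N)
    (hN : ∀ A ∈ M.finSets, lipschitzExt M.finSets_nonempty M.rkReal N A = M.rkReal A) :
    ∃ y ∈ megaQ M, ∀ k, ∑ i ∈ sublevel f k, y i =
      lipschitzExt M.finSets_nonempty M.rkReal N (sublevel f k) := by
  set g := lipschitzExt M.finSets_nonempty M.rkReal N
  have hg : IsSubmodular g := lipschitzExt_isSubmodular
    (fun A hA B hB => ⟨union_mem_finSets hA hB, inter_mem_finSets hA hB⟩)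
    (fun A hA B hB => rkReal_union_add_inter_le hA hB) hN₀
  have hg₀ : g ∅ = 0 := (hN ∅ empty_mem_finSets).trans rkReal_empty
  refine ⟨greedyVector g f, mem_megaQ_iff.2 ⟨?_, fun A hA => ?_⟩, fun k => ?_⟩
  · obtain ⟨k, hk⟩ := exists_sublevel_eq_univ f
    rw [← hk, sum_greedyVector_sublevel hf, hk, hg₀, sub_zero]
    exact hN univ univ_mem_finSets
  · linarith [sum_greedyVector_le hf hg A, lipschitzExt_le_of_mem (hL := M.finSets_nonempty)
      (r := M.rkReal) (N := N) hA]
  · rw [sum_greedyVector_sublevel hf, hg₀, sub_zero]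

lemma exists_seq_rkSet_eq_iSup {ι : Type*} {X : ι → Finset (Fin d)} {f : Fin d → ℕ}
    (hf : Injective f) (hX : ∀ j, ∃ k, X j = sublevel f k) :
    ∃ a : ι → ℕ → ℝ, (∀ j, Monotone (a j)) ∧
      (∀ j, rkSet (megaQ M) (X j) = ⨆ n, (a j n : EReal)) ∧
      ∀ n, ∃ y ∈ megaQ M, ∀ j, ∑ i ∈ X j, y i = a j n := by
  obtain ⟨N₀, hN₀, hN⟩ := exists_lipschitzExt_eq M.finSets_nonempty M.rkReal
  have h_attained : ∀ n : ℕ, ∃ y ∈ megaQ M, ∀ j,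
      ∑ i ∈ X j, y i = lipschitzExt M.finSets_nonempty M.rkReal (N₀ + n) (X j) := by
    intro n
    obtain ⟨y, hy, hy_sublevel⟩ :=
      exists_mem_megaQ_sum_sublevel_eq hf (by positivity) (hN (N₀ + n) (by simp))
    refine ⟨y, hy, fun j => ?_⟩
    obtain ⟨k, hk⟩ := hX j
    rw [hk, hy_sublevel]
  refine ⟨fun j n => lipschitzExt M.finSets_nonempty M.rkReal (N₀ + n) (X j),
    fun j => (lipschitzExt_mono (X j)).comp (monotone_const.add Nat.mono_cast),
    fun j => le_antisymm (iSup₂_le fun y hy => ?_) (iSup_le fun n => ?_), h_attained⟩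
  · obtain ⟨n, hn⟩ := exists_nat_ge (∑ i, |y i|)
    have hy_le : ∀ i, |y i| ≤ N₀ + n := fun i =>
      (single_le_sum (fun i _ => abs_nonneg (y i)) (mem_univ i)).trans (by linarith)
    exact le_iSup_of_le n (EReal.coe_le_coe_iff.2
      (sum_le_lipschitzExt (mem_megaQ_iff.1 hy).2 hy_le (X j)))
  · obtain ⟨y, hy, hyX⟩ := h_attained n
    simpa only [hyX j] using sum_le_rkSet hy (X j)

end Megamatroid

open Megamatroid in
/-- Lemma `lemsupequal`: for a maximal chain `∅ ⊂ X_1 ⊂ ⋯ ⊂ X_d = {1,…,d}` and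
coefficients `α` with `α_1,…,α_{d-1} ≥ 0`,
`sup_{y ∈ Q(rk)} ∑_j α_j ∑_{i ∈ X_j} y_i = ∑_j α_j · rk_Π(X_j)` in the extended reals
(where multiplication is `EReal` multiplication, so `0·∞ = 0`). -/
theorem sup_chain_combination (d : ℕ) (hd : 1 ≤ d) (M : Megamatroid d)
    (X : Fin d → Finset (Fin d)) (hmono : StrictMono X)
    (hcard : ∀ j : Fin d, (X j).card = (j : ℕ) + 1)
    (htop : X ⟨d - 1, by omega⟩ = Finset.univ)
    (α : Fin d → ℝ) (hα : ∀ j : Fin d, (j : ℕ) < d - 1 → 0 ≤ α j) :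
    (⨆ y ∈ megaQ M, ((∑ j : Fin d, α j * ∑ i ∈ X j, y i : ℝ) : EReal)) =
      ∑ j : Fin d, (α j : EReal) * rkSet (megaQ M) (X j) := by
  obtain ⟨f, hf, hXf⟩ := exists_injective_sublevel_eq_of_chain hmono.monotone hcard
    fun i => ⟨_, htop ▸ mem_univ i⟩
  obtain ⟨a, ha_mono, ha_rk, ha_y⟩ := exists_seq_rkSet_eq_iSup (M := M) hf fun j => ⟨_, hXf j⟩
  have h_last : ∀ j : Fin d, ¬(j : ℕ) < d - 1 → X j = univ := by
    intro j hj
    rw [← htop]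
    exact congrArg X (Fin.ext (by simp; omega))
  have h_const : ∀ j : Fin d, ¬(j : ℕ) < d - 1 → ∀ n, a j n = M.rkReal univ := by
    intro j hj n
    obtain ⟨y, hy, hyX⟩ := ha_y n
    rw [← hyX j, h_last j hj, (mem_megaQ_iff.1 hy).1]
  apply le_antisymm
  · refine iSup₂_le fun y hy => ?_
    rw [EReal.coe_finset_sum]
    refine sum_le_sum fun j _ => ?_
    rw [EReal.coe_mul]
    by_cases hj : (j : ℕ) < d - 1
    · exact mul_le_mul_of_nonneg_left (sum_le_rkSet hy _) (EReal.coe_nonneg.2 (hα j hj))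
    · simp only [ha_rk, h_const j hj, ciSup_const]
      rw [h_last j hj, (mem_megaQ_iff.1 hy).1]
  · simp_rw [ha_rk]
    refine (EReal.sum_coe_mul_iSup_le _ _ _ (fun j _ => ha_mono j) fun j _ => ?_).trans
      (iSup_le fun n => ?_)
    · by_cases hj : (j : ℕ) < d - 1
      · exact Or.inl (hα j hj)
      · exact Or.inr fun n => by rw [h_const j hj, h_const j hj]
    · obtain ⟨y, hy, hyX⟩ := ha_y n
      simp_rw [← hyX]
      exact le_iSup₂_of_le y hy le_rfl
end

section
/- Let rk be a megamatroid on {1,…,d} and let Π = Q(rk). Then the set function rk_Π is submodular: for all subsets A, B of {1,…,d}, rk_Π(A∪B) + rk_Π(A∩B) ≤ rk_Π(A) + rk_Π(B), where the inequality and sums are in the extended reals ℝ ∪ {−∞, +∞}. -/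
open scoped BigOperators

/-! Given `y, y' ∈ Q` and `C ⊆ D`, some `z ∈ Q` has `z(D) ≥ y(D)` and `z(C) ≥ y'(C)`; with
`C = A ∩ B`, `D = A ∪ B` this gives `y(A ∪ B) + y'(A ∩ B) ≤ z(A) + z(B)`. Such a `z` maximises
`∑_{k ∈ C} min (z k) (y' k)` over the compact set of points of `Q` lying coordinatewise between
`y` and `y'` with `z(D) ≥ y(D)`: if `z i < y' i` for some `i ∈ C`, then the least tight set of `z`
containing `i` has a coordinate `j` with `y' j < z j`, and moving a little mass from `j` to `i`
stays in `Q` and increases the objective. -/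

open Finset Filter Topology

theorem Finset.exists_least_of_inter_closed {α : Type*} [Fintype α] [DecidableEq α]
    {p : Finset α → Prop} (huniv : p univ) (hinter : ∀ C, p C → ∀ C', p C' → p (C ∩ C')) :
    ∃ T, p T ∧ ∀ C, p C → T ⊆ C := by
  classical
  exact ⟨(univ.filter p).inf id, Finset.inf_induction huniv hinter (by simp),
    fun C hC => Finset.inf_le (f := id) (by simpa using hC)⟩

theorem Finset.sum_add_single_sub_single {ι G : Type*} [DecidableEq ι] [AddCommGroup G]
    (v : ι → G) (i j : ι) (ε : G) (C : Finset ι) :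
    ∑ k ∈ C, (v + Pi.single i ε - Pi.single j ε : ι → G) k =
      ∑ k ∈ C, v k + (if i ∈ C then ε else 0) - (if j ∈ C then ε else 0) := by
  simp only [Pi.add_apply, Pi.sub_apply, sum_sub_distrib, sum_add_distrib, sum_pi_single']

namespace Megamatroid

variable {d : ℕ} (M : Megamatroid d)

theorem exists_rk_union_inter {A B : Finset (Fin d)} {a b : ℤ} (hA : M.rk A = a)
    (hB : M.rk B = b) :
    ∃ p q : ℤ, M.rk (A ∪ B) = p ∧ M.rk (A ∩ B) = q ∧ p + q ≤ a + b := by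
  obtain ⟨hU, hI, hle⟩ := M.submodular A B (by simp [hA]) (by simp [hB])
  lift M.rk (A ∪ B) to ℤ using hU with p hp
  lift M.rk (A ∩ B) to ℤ using hI with q hq
  rw [hA, hB] at hle
  exact ⟨p, q, rfl, rfl, by exact_mod_cast hle⟩

def IsTight (v : Fin d → ℝ) (C : Finset (Fin d)) : Prop :=
  ∃ r : ℤ, M.rk C = r ∧ ∑ k ∈ C, v k = r

variable {M} {v : Fin d → ℝ}

theorem isTight_univ (hv : v ∈ megaQ M) : M.IsTight v univ := by
  lift M.rk univ to ℤ using M.rk_univ_ne_top with r hr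
  exact ⟨r, hr.symm, hv.1 r hr.symm⟩

theorem IsTight.inter (hv : v ∈ megaQ M) {C C' : Finset (Fin d)} (hC : M.IsTight v C)
    (hC' : M.IsTight v C') : M.IsTight v (C ∩ C') := by
  obtain ⟨a, ha, hva⟩ := hC
  obtain ⟨b, hb, hvb⟩ := hC'
  obtain ⟨p, q, hp, hq, hpq⟩ := M.exists_rk_union_inter ha hb
  have hUI : ∑ k ∈ C ∪ C', v k + ∑ k ∈ C ∩ C', v k = ∑ k ∈ C, v k + ∑ k ∈ C', v k :=
    sum_union_inter
  have : (p + q : ℝ) ≤ a + b := by exact_mod_cast hpq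
  exact ⟨q, hq, le_antisymm (hv.2 _ q hq) (by linarith [hv.2 _ p hp])⟩

theorem exists_isTight_least (hv : v ∈ megaQ M) (i : Fin d) :
    ∃ T, (M.IsTight v T ∧ i ∈ T) ∧ ∀ C, M.IsTight v C ∧ i ∈ C → T ⊆ C :=
  Finset.exists_least_of_inter_closed ⟨isTight_univ hv, mem_univ i⟩
    fun _ hC _ hC' => ⟨hC.1.inter hv hC'.1, mem_inter.2 ⟨hC.2, hC'.2⟩⟩

theorem exists_lt_forall_isTight_mem {u : Fin d → ℝ} (hu : u ∈ megaQ M) (hv : v ∈ megaQ M)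
    {i : Fin d} (hi : v i < u i) :
    ∃ j, u j < v j ∧ ∀ C, M.IsTight v C → i ∈ C → j ∈ C := by
  obtain ⟨T, ⟨⟨r, hr, hvT⟩, hiT⟩, hleast⟩ := exists_isTight_least hv i
  suffices ∃ j ∈ T, u j < v j from
    let ⟨j, hjT, hj⟩ := this; ⟨j, hj, fun C hC hiC => hleast C ⟨hC, hiC⟩ hjT⟩
  by_contra! h
  have : ∑ k ∈ T, v k < ∑ k ∈ T, u k := Finset.sum_lt_sum h ⟨i, hiT, hi⟩
  linarith [hu.2 T r hr]

theorem eventually_add_single_sub_single_mem_megaQ (hv : v ∈ megaQ M) {i j : Fin d}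
    (hij : ∀ C, M.IsTight v C → i ∈ C → j ∈ C) :
    ∀ᶠ ε in 𝓝[>] (0 : ℝ), v + Pi.single i ε - Pi.single j ε ∈ megaQ M := by
  have hslack : ∀ C : Finset (Fin d), ∀ᶠ ε in 𝓝[>] (0 : ℝ),
      ∀ r : ℤ, M.rk C = r → i ∈ C → j ∉ C → ∑ k ∈ C, v k + ε ≤ r := by
    intro C
    by_cases hC : ∃ r : ℤ, M.rk C = r ∧ i ∈ C ∧ j ∉ C
    · obtain ⟨r, hr, hi, hj⟩ := hC
      have hlt : ∑ k ∈ C, v k < r :=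
        (hv.2 C r hr).lt_of_ne fun heq => hj (hij C ⟨r, hr, heq⟩ hi)
      filter_upwards [(eventually_lt_nhds (sub_pos.2 hlt)).filter_mono nhdsWithin_le_nhds]
        with ε hε r' hr' _ _
      obtain rfl : r' = r := WithTop.coe_injective (hr'.symm.trans hr)
      linarith
    · exact Eventually.of_forall fun ε r hr hi hj => absurd ⟨r, hr, hi, hj⟩ hC
  filter_upwards [self_mem_nhdsWithin, eventually_all.2 hslack] with ε (hε : 0 < ε) hC
  refine ⟨fun r hr => ?_, fun C r hr => ?_⟩
  · rw [sum_add_single_sub_single, hv.1 r hr]; simp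
  · have := hv.2 C r hr
    rw [sum_add_single_sub_single]
    split_ifs with hi hj hj
    · linarith
    · linarith [hC C r hr hi hj]
    all_goals linarith

theorem exists_step_toward {w y : Fin d → ℝ} (hw : w ∈ megaQ M) (hy : y ∈ megaQ M) {i : Fin d}
    (hi : w i < y i) :
    ∃ w' ∈ megaQ M, (∀ k, w' k ∈ Set.uIcc (w k) (y k)) ∧ w i < w' i ∧
      ∀ D : Finset (Fin d), i ∈ D → ∑ k ∈ D, w k ≤ ∑ k ∈ D, w' k := by
  obtain ⟨j, hj, hij⟩ := exists_lt_forall_isTight_mem hy hw hi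
  have hji : j ≠ i := by rintro rfl; linarith
  have hsmall : ∀ᶠ ε in 𝓝[>] (0 : ℝ), ε ≤ y i - w i ∧ ε ≤ w j - y j :=
    ((eventually_le_nhds (sub_pos.2 hi)).and (eventually_le_nhds (sub_pos.2 hj))).filter_mono
      nhdsWithin_le_nhds
  obtain ⟨ε, hmem, hε : 0 < ε, hεi, hεj⟩ :=
    ((eventually_add_single_sub_single_mem_megaQ hw hij).and
      (eventually_mem_nhdsWithin.and hsmall)).exists
  set w' := w + Pi.single i ε - Pi.single j ε
  have hw'i : w' i = w i + ε := by simp [w', hji.symm]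
  have hw'j : w' j = w j - ε := by simp [w', hji]
  have hw'k : ∀ k, k ≠ i → k ≠ j → w' k = w k := fun k hki hkj => by simp [w', hki, hkj]
  refine ⟨w', hmem, fun k => ?_, by linarith, fun D hiD => ?_⟩
  · rcases eq_or_ne k i with rfl | hki
    · exact Set.mem_uIcc.2 (Or.inl ⟨by linarith, by linarith⟩)
    rcases eq_or_ne k j with rfl | hkj
    · exact Set.mem_uIcc.2 (Or.inr ⟨by linarith, by linarith⟩)
    · rw [hw'k k hki hkj]
      exact Set.left_mem_uIcc
  · rw [sum_add_single_sub_single, if_pos hiD]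
    split_ifs <;> linarith

variable (M) in
theorem isClosed_megaQ : IsClosed (megaQ M) := by
  have hsum : ∀ A : Finset (Fin d), Continuous fun y : Fin d → ℝ => ∑ i ∈ A, y i :=
    fun A => continuous_finsetSum A fun i _ => continuous_apply i
  simp only [megaQ, Set.ofPred_and, Set.ofPred_forall]
  refine .inter (isClosed_iInter fun r => isClosed_iInter fun _ => ?_)
    (isClosed_iInter fun A => isClosed_iInter fun r => isClosed_iInter fun _ => ?_)
  · exact isClosed_eq (hsum _) continuous_const
  · exact isClosed_le (hsum A) continuous_const

theorem exists_mem_megaQ_sum_le_sum {C D : Finset (Fin d)} (hCD : C ⊆ D) {y y' : Fin d → ℝ}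
    (hy : y ∈ megaQ M) (hy' : y' ∈ megaQ M) :
    ∃ z ∈ megaQ M, ∑ k ∈ D, y k ≤ ∑ k ∈ D, z k ∧ ∑ k ∈ C, y' k ≤ ∑ k ∈ C, z k := by
  set K := (megaQ M ∩ {z | ∑ k ∈ D, y k ≤ ∑ k ∈ D, z k}) ∩
    Set.univ.pi fun k => Set.uIcc (y k) (y' k)
  have hK : IsCompact K :=
    (isCompact_univ_pi fun _ => isCompact_uIcc).inter_left <| (isClosed_megaQ M).inter <|
      isClosed_le continuous_const <| continuous_finsetSum D fun k _ => continuous_apply k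
  have hyK : y ∈ K := ⟨⟨hy, Set.mem_ofPred.2 le_rfl⟩, fun k _ => Set.left_mem_uIcc⟩
  set ψ : (Fin d → ℝ) → ℝ := fun z => ∑ k ∈ C, min (z k) (y' k)
  obtain ⟨w, ⟨⟨hwQ, hwD⟩, hwbox⟩, hwmax⟩ := hK.exists_isMaxOn ⟨y, hyK⟩ <|
    (continuous_finsetSum C fun k _ => (continuous_apply k).min continuous_const).continuousOn
  refine ⟨w, hwQ, hwD, Finset.sum_le_sum fun i hiC => ?_⟩
  by_contra! hi
  obtain ⟨w', hw'Q, hw'box, hw'i, hw'D⟩ := exists_step_toward hwQ hy' hi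
  have hw'K : w' ∈ K := ⟨⟨hw'Q, hwD.trans (hw'D D (hCD hiC))⟩, fun k _ =>
    Set.uIcc_subset_uIcc (hwbox k trivial) Set.right_mem_uIcc (hw'box k)⟩
  have : ψ w < ψ w' := Finset.sum_lt_sum
    (fun k _ => le_min (hw'box k).1 (min_le_right _ _))
    ⟨i, hiC, by rw [min_eq_left hi.le]; exact lt_min hw'i hi⟩
  exact (hwmax hw'K).not_gt this

end Megamatroid

/-- The set function `rk_Π` of the base polyhedron of a megamatroid is submodular
(in the extended reals). -/
theorem rkSet_submodular (d : ℕ) (M : Megamatroid d) (A B : Finset (Fin d)) :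
    rkSet (megaQ M) (A ∪ B) + rkSet (megaQ M) (A ∩ B) ≤
      rkSet (megaQ M) A + rkSet (megaQ M) B := by
  refine EReal.add_le_of_forall_lt fun a ha b hb => ?_
  obtain ⟨y, hy, hay⟩ := lt_biSup_iff.1 ha
  obtain ⟨y', hy', hby⟩ := lt_biSup_iff.1 hb
  obtain ⟨z, hz, hyz, hy'z⟩ :=
    Megamatroid.exists_mem_megaQ_sum_le_sum inter_subset_union hy hy'
  calc a + b ≤ ((∑ k ∈ A ∪ B, y k : ℝ) : EReal) + ((∑ k ∈ A ∩ B, y' k : ℝ) : EReal) :=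
        add_le_add hay.le hby.le
    _ ≤ ((∑ k ∈ A ∪ B, z k + ∑ k ∈ A ∩ B, z k : ℝ) : EReal) := by
        rw [← EReal.coe_add, EReal.coe_le_coe_iff]; linarith
    _ = ((∑ k ∈ A, z k : ℝ) : EReal) + ((∑ k ∈ B, z k : ℝ) : EReal) := by
        rw [sum_union_inter, EReal.coe_add]
    _ ≤ rkSet (megaQ M) A + rkSet (megaQ M) B :=
        add_le_add (le_biSup (fun y => ((∑ k ∈ A, y k : ℝ) : EReal)) hz)
          (le_biSup (fun y => ((∑ k ∈ B, y k : ℝ) : EReal)) hz)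
end

section
/- Let rk_1,…,rk_n be megamatroids on {1,…,d}, all of the same rank r (i.e. rk_m({1,…,d}) = r for all m), and let a_1,…,a_n be integers such that Σ_{m=1}^n a_m [Q(rk_m)] = 0 as a function ℝ^d → ℤ. Then Σ_{m=1}^n a_m = 0. -/
open scoped BigOperators

/-- The indicator function `[Π] : ℝ^d → ℤ` of a subset `Π ⊆ ℝ^d`. -/
noncomputable def indFn {d : ℕ} (P : Set (Fin d → ℝ)) : (Fin d → ℝ) → ℤ :=
  P.indicator fun _ => 1

/-!
The base polyhedra `Q(rk_m)` are closed, convex and nonempty, so the claim is an instance of the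
valuativity of the Euler characteristic, which on closed convex sets is `1` on nonempty sets and
`0` on the empty set. Intersecting with a large ball reduces to compact convex sets, where one
inducts on the dimension: project away the first coordinate, and on each line of the fibration
compare the relation `∑ aₘ [Πₘ] = 0` at a point `b` with the relation just to the right of `b`;
the difference is the sum of the `aₘ` over the segments with right endpoint `b`.

`Q(rk)` is nonempty by the greedy construction along a maximal chain of finite-rank sets, where
submodularity gives the defining inequalities.
-/

open Set Filter Topology

open Classical in
/-- The Euler characteristic of a compact convex set is `1` if it is nonempty and `0` otherwise;
`EulerCharValuative E` says that on compact convex subsets of `E` it is a valuation, i.e. it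
factors through integer combinations of indicator functions. -/
def EulerCharValuative (E : Type*) [TopologicalSpace E] [AddCommMonoid E] [Module ℝ E] : Prop :=
  ∀ (ι : Type) [Fintype ι] (C : ι → Set E) (a : ι → ℤ), (∀ i, IsCompact (C i)) →
    (∀ i, Convex ℝ (C i)) → (∀ x, ∑ i with x ∈ C i, a i = 0) → ∑ i with (C i).Nonempty, a i = 0

theorem eventually_nhdsGT_mem_iff {α : Type*} [TopologicalSpace α] [LinearOrder α]
    [OrderTopology α] {s : Set α} (hs : IsClosed s) (hs' : s.OrdConnected) (b : α) :
    ∀ᶠ t in 𝓝[>] b, t ∈ s ↔ b ∈ s ∧ ¬IsGreatest s b := by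
  by_cases hb : b ∈ s
  · by_cases hg : IsGreatest s b
    · filter_upwards [self_mem_nhdsWithin] with t (ht : b < t)
      simpa [hb, hg] using fun hts => (hg.2 hts).not_gt ht
    · obtain ⟨c, hc, hbc⟩ : ∃ c ∈ s, b < c := by simpa [IsGreatest, upperBounds, hb] using hg
      filter_upwards [Ioo_mem_nhdsGT hbc] with t ht
      simpa [hb, hg] using hs'.out hb hc (Ioo_subset_Icc_self ht)
  · filter_upwards [nhdsWithin_le_nhds (hs.isOpen_compl.mem_nhds hb)] with t ht
    simp_all

theorem eulerCharValuative_real : EulerCharValuative ℝ := by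
  classical
  intro ι _ I a hcomp hconv hzero
  have hfiber (b : ℝ) : ∑ i with IsGreatest (I i) b, a i = 0 := by
    obtain ⟨t, ht⟩ := (eventually_all.2 fun i =>
      eventually_nhdsGT_mem_iff (hcomp i).isClosed (hconv i).ordConnected b).exists
    have hsplit := Finset.sum_filter_add_sum_filter_not (Finset.univ.filter fun i => b ∈ I i)
      (fun i => IsGreatest (I i) b) a
    rw [Finset.filter_filter, Finset.filter_filter, hzero b,
      Finset.filter_congr fun i _ => (ht i).symm, hzero t,
      Finset.filter_congr fun i _ => and_iff_right_of_imp fun hg : IsGreatest (I i) b => hg.1]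
      at hsplit
    simpa using hsplit
  rw [← Finset.sum_fiberwise_of_maps_to (g := fun i => sSup (I i))
    (fun i _ => Finset.mem_image_of_mem (fun i => sSup (I i)) (Finset.mem_univ i))]
  refine Finset.sum_eq_zero fun b _ => ?_
  rw [Finset.filter_filter, ← hfiber b]
  refine Finset.sum_congr (Finset.filter_congr fun i _ => ⟨?_, fun hg => ⟨⟨b, hg.1⟩, hg.csSup_eq⟩⟩)
    fun _ _ => rfl
  rintro ⟨hne, rfl⟩
  exact (hcomp i).isGreatest_sSup hne

theorem eulerCharValuative_of_unique {E : Type*} [TopologicalSpace E] [AddCommMonoid E]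
    [Module ℝ E] [Unique E] : EulerCharValuative E := by
  classical
  intro ι _ C a _ _ hzero
  have hne (i : ι) : (C i).Nonempty ↔ default ∈ C i :=
    ⟨fun ⟨x, hx⟩ => Unique.eq_default x ▸ hx, fun h => ⟨_, h⟩⟩
  simpa only [hne] using hzero default

theorem EulerCharValuative.real_prod {E : Type*} [TopologicalSpace E] [T2Space E]
    [AddCommMonoid E] [Module ℝ E] (h : EulerCharValuative E) : EulerCharValuative (ℝ × E) := by
  classical
  intro ι _ C a hcomp hconv hzero
  have hslice (x : E) : ∑ i with x ∈ Prod.snd '' C i, a i = 0 := by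
    have := eulerCharValuative_real ι (fun i => (·, x) ⁻¹' C i) a
      (fun i => (hcomp i).image continuous_fst |>.of_isClosed_subset
        ((hcomp i).isClosed.preimage (by fun_prop)) fun t ht => ⟨(t, x), ht, rfl⟩)
      (fun i s hs t ht p q hp hq hpq => by
        simpa [← add_smul, hpq] using hconv i hs ht hp hq hpq)
      fun t => hzero (t, x)
    simpa [Set.Nonempty] using this
  simpa using h ι (fun i => Prod.snd '' C i) a (fun i => (hcomp i).image continuous_snd)
    (fun i => (hconv i).linear_image (LinearMap.snd ℝ ℝ E)) hslice

theorem EulerCharValuative.of_continuousLinearEquiv {E F : Type*} [TopologicalSpace E]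
    [AddCommMonoid E] [Module ℝ E] [TopologicalSpace F] [AddCommMonoid F] [Module ℝ F]
    (h : EulerCharValuative F) (e : F ≃L[ℝ] E) : EulerCharValuative E := by
  classical
  intro ι _ C a hcomp hconv hzero
  have hne (i : ι) : (e ⁻¹' C i).Nonempty ↔ (C i).Nonempty := e.surjective.nonempty_preimage
  simpa only [hne] using h ι (fun i => e ⁻¹' C i) a
    (fun i => e.toHomeomorph.isCompact_preimage.2 (hcomp i))
    (fun i => (hconv i).linear_preimage e.toLinearMap) fun y => hzero (e y)

theorem eulerCharValuative_pi : ∀ d : ℕ, EulerCharValuative (Fin d → ℝ)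
  | 0 => eulerCharValuative_of_unique
  | d + 1 => (eulerCharValuative_pi d).real_prod.of_continuousLinearEquiv
      (Fin.consEquivL ℝ fun _ => ℝ)

open Classical in
theorem EulerCharValuative.sum_nonempty_eq_zero_of_isClosed {E : Type*}
    [NormedAddCommGroup E] [NormedSpace ℝ E] [ProperSpace E] (h : EulerCharValuative E)
    {ι : Type} [Fintype ι] (C : ι → Set E) (a : ι → ℤ) (hclosed : ∀ i, IsClosed (C i))
    (hconv : ∀ i, Convex ℝ (C i)) (hzero : ∀ x, ∑ i with x ∈ C i, a i = 0) :
    ∑ i with (C i).Nonempty, a i = 0 := by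
  have hball (i : ι) :
      ∀ᶠ R in atTop, (C i ∩ Metric.closedBall 0 R).Nonempty ↔ (C i).Nonempty := by
    by_cases hne : (C i).Nonempty
    · obtain ⟨x, hx⟩ := hne
      filter_upwards [eventually_ge_atTop ‖x‖] with R hR
      exact iff_of_true ⟨x, hx, mem_closedBall_zero_iff.2 hR⟩ ⟨x, hx⟩
    · exact .of_forall fun R => iff_of_false (fun h' => hne (h'.mono inter_subset_left)) hne
  obtain ⟨R, hR⟩ := (eventually_all.2 hball).exists
  simp only [← hR]
  refine h ι (fun i => C i ∩ Metric.closedBall 0 R) a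
    (fun i => (isCompact_closedBall 0 R).inter_left (hclosed i))
    (fun i => (hconv i).inter (convex_closedBall 0 R)) fun x => ?_
  by_cases hx : x ∈ Metric.closedBall 0 R
  · simpa [hx] using hzero x
  · simp [hx]

namespace Megamatroid

variable {d : ℕ} (M : Megamatroid d)

theorem exists_lower_cover {C : Finset (Fin d)} (hne : C.Nonempty) :
    ∃ C' ⊂ C, M.rk C' ≠ ⊤ ∧ ∀ B ⊆ C, M.rk B ≠ ⊤ → B ∪ C' = C ∨ B ⊆ C' := by
  obtain ⟨C', hmax⟩ := Finset.exists_maximal (s := C.powerset.filter fun B => M.rk B ≠ ⊤ ∧ B ≠ C)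
    ⟨∅, by simp [M.rk_empty, hne.ne_empty.symm]⟩
  simp only [Finset.mem_filter, Finset.mem_powerset] at hmax
  obtain ⟨⟨hC'C, hC', hC'ne⟩, hmax⟩ := hmax
  refine ⟨C', ssubset_of_subset_of_ne hC'C hC'ne, hC', fun B hBC hB => ?_⟩
  refine or_iff_not_imp_left.2 fun hBC' => ?_
  exact Finset.subset_union_left.trans <| hmax
    ⟨Finset.union_subset hBC hC'C, (M.submodular B C' hB hC').1, hBC'⟩ Finset.subset_union_right

theorem exists_int_base_of_rk_ne_top (C : Finset (Fin d)) (hC : M.rk C ≠ ⊤) :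
    ∃ y : Fin d → ℤ, (∀ i ∉ C, y i = 0) ∧ ((∑ i ∈ C, y i : ℤ) : WithTop ℤ) = M.rk C ∧
      ∀ B ⊆ C, ((∑ i ∈ B, y i : ℤ) : WithTop ℤ) ≤ M.rk B := by
  induction C using Finset.strongInduction with
  | H C ih =>
  rcases C.eq_empty_or_nonempty with rfl | hne
  · exact ⟨0, fun _ _ => rfl, by simp [M.rk_empty],
      fun B hB => by simp [Finset.subset_empty.1 hB, M.rk_empty]⟩
  obtain ⟨C', hC'C, hC', hcover⟩ := M.exists_lower_cover hne
  obtain ⟨y', hy'supp, hy'C', hy'le⟩ := ih C' hC'C hC'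
  obtain ⟨e, heC, heC'⟩ := Finset.exists_of_ssubset hC'C
  obtain ⟨c, hc⟩ := WithTop.ne_top_iff_exists.1 hC
  obtain ⟨c', hc'⟩ := WithTop.ne_top_iff_exists.1 hC'
  have hy'inter (B : Finset (Fin d)) : ∑ i ∈ B ∩ C', y' i = ∑ i ∈ B, y' i :=
    Finset.sum_subset Finset.inter_subset_left fun i hiB hi =>
      hy'supp i fun hiC' => hi (Finset.mem_inter.2 ⟨hiB, hiC'⟩)
  set y : Fin d → ℤ := y' + Pi.single e (c - c')
  have hsum (B : Finset (Fin d)) :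
      ∑ i ∈ B, y i = ∑ i ∈ B ∩ C', y' i + if e ∈ B then c - c' else 0 := by
    rw [hy'inter, ← Finset.sum_pi_single', ← Finset.sum_add_distrib]
    rfl
  refine ⟨y, fun i hi => ?_, ?_, fun B hBC => ?_⟩
  · have hie : i ≠ e := fun h => hi (h ▸ heC)
    simp [y, hy'supp i fun h => hi (hC'C.subset h), hie]
  · rw [hsum, if_pos heC, Finset.inter_eq_right.2 hC'C.subset, ← hc]
    rw [← hc', WithTop.coe_inj] at hy'C'
    rw [hy'C', add_sub_cancel]
  · by_cases hB : M.rk B = ⊤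
    · simp [hB]
    obtain ⟨b, hb⟩ := WithTop.ne_top_iff_exists.1 hB
    obtain ⟨-, hBC'fin, hsubmod⟩ := M.submodular B C' hB hC'
    obtain ⟨b', hb'⟩ := WithTop.ne_top_iff_exists.1 hBC'fin
    have hIH := hy'le (B ∩ C') Finset.inter_subset_right
    rw [← hb', WithTop.coe_le_coe] at hIH
    rw [hsum, ← hb, WithTop.coe_le_coe]
    by_cases heB : e ∈ B
    · have hunion : B ∪ C' = C := (hcover B hBC hB).resolve_right fun h => heC' (h heB)
      rw [hunion, ← hc, ← hc', ← hb, ← hb'] at hsubmod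
      have : c + b' ≤ b + c' := by exact_mod_cast hsubmod
      rw [if_pos heB]
      linarith
    · have hBC' : B ⊆ C' := (hcover B hBC hB).resolve_left fun h =>
        heB ((Finset.mem_union.1 (h.symm ▸ heC)).resolve_right heC')
      rw [Finset.inter_eq_left.2 hBC', ← hb, WithTop.coe_inj] at hb'
      rw [if_neg heB, add_zero]
      exact hIH.trans hb'.le

end Megamatroid

theorem megaQ_nonempty {d : ℕ} (M : Megamatroid d) : (megaQ M).Nonempty := by
  obtain ⟨y, -, hsum, hle⟩ := M.exists_int_base_of_rk_ne_top Finset.univ M.rk_univ_ne_top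
  refine ⟨fun i => y i, fun z hz => ?_, fun A z hz => ?_⟩ <;> beta_reduce
  · rw [hz, WithTop.coe_inj] at hsum
    exact_mod_cast hsum
  · have := hle A (Finset.subset_univ A)
    rw [hz, WithTop.coe_le_coe] at this
    exact_mod_cast this

theorem isClosed_megaQ {d : ℕ} (M : Megamatroid d) : IsClosed (megaQ M) := by
  simp only [megaQ, ofPred_and, ofPred_forall]
  exact (isClosed_iInter fun z => isClosed_iInter fun _ =>
      isClosed_eq (by fun_prop) continuous_const).inter
    (isClosed_iInter fun A => isClosed_iInter fun z => isClosed_iInter fun _ =>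
      isClosed_le (by fun_prop) continuous_const)

theorem convex_megaQ {d : ℕ} (M : Megamatroid d) : Convex ℝ (megaQ M) := by
  have hlin (A : Finset (Fin d)) : IsLinearMap ℝ fun y : Fin d → ℝ => ∑ i ∈ A, y i :=
    ⟨fun _ _ => Finset.sum_add_distrib, fun _ _ => by simp [Finset.mul_sum]⟩
  simp only [megaQ, ofPred_and, ofPred_forall]
  exact (convex_iInter fun z => convex_iInter fun _ => convex_hyperplane (hlin _) _).inter
    (convex_iInter fun A => convex_iInter fun z => convex_iInter fun _ =>
      convex_halfSpace_le (hlin A) _)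

theorem one_valuative_general (d : ℕ) (n : ℕ) (M : Fin n → Megamatroid d)
    (a : Fin n → ℤ)
    (hzero : (∑ m, a m • indFn (megaQ (M m))) = 0) :
    (∑ m, a m) = 0 := by
  classical
  have hpoint (y : Fin d → ℝ) : ∑ m with y ∈ megaQ (M m), a m = 0 := by
    simpa [indFn, Finset.sum_apply, Set.indicator_apply, Finset.sum_filter] using congrFun hzero y
  simpa [megaQ_nonempty] using (eulerCharValuative_pi d).sum_nonempty_eq_zero_of_isClosed _ a
    (fun m => isClosed_megaQ (M m)) (fun m => convex_megaQ (M m)) hpoint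

/-- The constant function `1` is valuative: if `∑ m, a_m [Q(rk_m)] = 0` for megamatroids
of common rank `r` on `{1,…,d}`, then `∑ m, a_m = 0`. -/
theorem one_valuative (d : ℕ) (r : ℤ) (n : ℕ) (M : Fin n → Megamatroid d)
    (hrank : ∀ m, (M m).rk Finset.univ = (r : WithTop ℤ))
    (a : Fin n → ℤ)
    (hzero : (∑ m, a m • indFn (megaQ (M m))) = 0) :
    (∑ m, a m) = 0 :=
  one_valuative_general d n M a hzero
end
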